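/- Let n > 1 and let Φ : ℤⁿ → ℝ be bounded and slowly oscillating. Then the set of partial limits of Φ at infinity, i.e. the set of all c ∈ ℝ such that c = lim_{m→∞} Φ(g(m)) for some sequence g tending to infinity, equals the interval [liminf_{x→∞} Φ(x), limsup_{x→∞} Φ(x)]; in particular it is connected. -/

import Mathlib

/-!
For `n ≥ 2` the lattice points outside a box `[-R, R]ⁿ` are connected by unit steps: move one
coordinate at a time, always keeping some other coordinate large. Slow oscillation makes `Φ` change
by less than `ε` along unit steps far enough out, and `liminf`/`limsup` supply arbitrarily far
points where `Φ < c + ε` and where `c - ε < Φ`. Walking from one to the other outside the box,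
`Φ` must come within `ε` of `c`, so every `c ∈ [liminf, limsup]` is a cluster point of `Φ` at
infinity. Conversely cluster points lie between `liminf` and `limsup`, and since the cofinite
filter on `ℤⁿ` is countably generated, cluster points are exactly the sequential partial limits.
-/

open Filter Relation Topology

theorem Relation.ReflTransGen.exists_abs_sub_lt {α : Type*} {r : α → α → Prop} {f : α → ℝ}
    {a b : α} {ε c : ℝ} (hab : ReflTransGen r a b) (hr : ∀ x y, r x y → |f y - f x| < ε)
    (ha : f a < c + ε) (hb : c - ε < f b) : ∃ x, ReflTransGen r a x ∧ |f x - c| < ε := by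
  induction hab with
  | refl => exact ⟨a, .refl, abs_sub_lt_iff.2 ⟨by linarith, by linarith⟩⟩
  | @tail y z hay hyz ih =>
    by_cases hy : c - ε < f y
    · exact ih hy
    · have := (abs_sub_lt_iff.1 (hr y z hyz)).1
      exact ⟨z, hay.tail hyz, abs_sub_lt_iff.2 ⟨by linarith, by linarith⟩⟩

theorem exists_pi_norm_eq_norm_apply {ι : Type*} [Fintype ι] [Nonempty ι] {E : Type*}
    [SeminormedAddGroup E] (x : ι → E) : ∃ i, ‖x‖ = ‖x i‖ := by
  obtain ⟨i, -, hi⟩ := Finset.exists_mem_eq_sup Finset.univ Finset.univ_nonempty (‖x ·‖₊)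
  exact ⟨i, by rw [Pi.norm_def, hi, coe_nnnorm]⟩

section
variable {E : Type*} [SeminormedAddGroup E] [ProperSpace E] [DiscreteTopology E]

theorem cofinite_eq_comap_norm_atTop : (cofinite : Filter E) = comap norm atTop := by
  rw [comap_norm_atTop, Metric.cobounded_eq_cocompact, cocompact_eq_cofinite]

theorem hasBasis_cofinite_lt_norm :
    (cofinite : Filter E).HasBasis (fun _ : ℝ => True) (fun R => {x | R < ‖x‖}) :=
  cofinite_eq_comap_norm_atTop (E := E) ▸ atTop_basis_Ioi.comap _

end

theorem exists_seq_tendsto_comp_iff_mapClusterPt {α X : Type*} [TopologicalSpace X]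
    [FirstCountableTopology X] {F : Filter α} [F.IsCountablyGenerated] {u : α → X} {x : X} :
    (∃ g : ℕ → α, Tendsto g atTop F ∧ Tendsto (fun m => u (g m)) atTop (𝓝 x)) ↔
      MapClusterPt x F u :=
  ⟨fun ⟨_, hg, hx⟩ => .of_comp hg hx.mapClusterPt,
    fun hx => let ⟨ψ, hψ, hψF⟩ := hx.exists_seq_tendsto; ⟨ψ, hψF, hψ⟩⟩

section LatticeWalks

variable {ι : Type*} [Fintype ι] [DecidableEq ι] {R : ℝ}

def FarUnitStep (R : ℝ) (x y : ι → ℤ) : Prop :=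
  R < ‖x‖ ∧ R < ‖y‖ ∧ ∃ i, y = x + Pi.single i 1 ∨ x = y + Pi.single i 1

instance : Std.Symm (FarUnitStep (ι := ι) R) :=
  ⟨fun _ _ ⟨hx, hy, i, h⟩ => ⟨hy, hx, i, h.symm⟩⟩

theorem lt_norm_of_reflTransGen_farUnitStep {a x : ι → ℤ} (h : ReflTransGen (FarUnitStep R) a x)
    (ha : R < ‖a‖) : R < ‖x‖ := by
  rcases h.cases_tail with rfl | ⟨y, -, hyx⟩
  exacts [ha, hyx.2.1]

theorem reflTransGen_farUnitStep_update {x : ι → ℤ} {i j : ι} (hji : j ≠ i) (hj : R < ‖x j‖)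
    (t : ℤ) : ReflTransGen (FarUnitStep R) x (Function.update x i t) := by
  set f : ℤ → ι → ℤ := Function.update x i
  have hstep (s : ℤ) : FarUnitStep R (f s) (f (s + 1)) := by
    have hfar (s : ℤ) : R < ‖f s‖ :=
      hj.trans_le ((Function.update_of_ne hji s x).symm ▸ norm_le_pi_norm (f s) j)
    refine ⟨hfar s, hfar (s + 1), i, Or.inl ?_⟩
    ext k
    by_cases hk : k = i <;> simp [f, hk]
  have := reflTransGen_of_succ (fun s t => FarUnitStep R (f s) (f t)) (n := x i) (m := t)
    (fun s _ => by simpa [Order.succ_eq_add_one] using hstep s)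
    (fun s _ => by simpa [Order.succ_eq_add_one] using symm_of _ (hstep s))
  simpa [Function.onFun, f] using ReflTransGen.lift f (fun _ _ h => h) _ _ this

theorem reflTransGen_farUnitStep_piecewise {x : ι → ℤ} {j : ι} (hj : R < ‖x j‖) (K : ℤ)
    {s : Finset ι} (hjs : j ∉ s) :
    ReflTransGen (FarUnitStep R) x (s.piecewise (fun _ => K) x) := by
  induction s using Finset.induction_on with
  | empty => simpa using .refl
  | @insert a s has ih =>
    rw [Finset.piecewise_insert]
    have hja : j ≠ a := fun h => hjs (h ▸ Finset.mem_insert_self a s)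
    have hjs' : j ∉ s := fun h => hjs (Finset.mem_insert_of_mem h)
    exact (ih hjs').trans <| reflTransGen_farUnitStep_update hja
      (by rwa [Finset.piecewise_eq_of_notMem _ _ _ hjs']) K

theorem reflTransGen_farUnitStep_const [Nontrivial ι] {x : ι → ℤ} (hx : R < ‖x‖) {K : ℤ}
    (hK : R < ‖K‖) : ReflTransGen (FarUnitStep R) x (fun _ => K) := by
  -- Move a second coordinate `j` to `K` while the coordinate `i` realising the norm stays put,
  -- then every other coordinate to `K` while `j` stays put.
  obtain ⟨i, hi⟩ := exists_pi_norm_eq_norm_apply x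
  obtain ⟨j, hji⟩ := exists_ne i
  have hxy := reflTransGen_farUnitStep_update hji.symm (hi ▸ hx) K (x := x)
  have hyK := reflTransGen_farUnitStep_piecewise (x := Function.update x j K) (j := j)
    (by rwa [Function.update_self]) K (Finset.notMem_erase j Finset.univ)
  convert hxy.trans hyK using 1
  ext k
  by_cases hk : k = j <;> simp [hk]

theorem reflTransGen_farUnitStep [Nontrivial ι] {a b : ι → ℤ} (ha : R < ‖a‖) (hb : R < ‖b‖) :
    ReflTransGen (FarUnitStep R) a b := by
  obtain ⟨K, hK⟩ := exists_nat_gt R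
  have hK' : R < ‖(K : ℤ)‖ := by rwa [Int.norm_natCast]
  exact (reflTransGen_farUnitStep_const ha hK').trans
    (symm_of _ (reflTransGen_farUnitStep_const hb hK'))

theorem mem_Icc_iff_mapClusterPt [Nontrivial ι] {Φ : (ι → ℤ) → ℝ}
    (hle : IsBoundedUnder (· ≤ ·) cofinite Φ)
    (hge : IsBoundedUnder (· ≥ ·) cofinite Φ)
    (hso : ∀ i, Tendsto (fun x => Φ (x + Pi.single i 1) - Φ x) cofinite (𝓝 0)) {c : ℝ} :
    c ∈ Set.Icc (liminf Φ cofinite) (limsup Φ cofinite) ↔ MapClusterPt c cofinite Φ := by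
  refine ⟨fun hc => ?_, fun hc => ⟨hc.liminf_le, hc.le_limsup⟩⟩
  rw [Metric.nhds_basis_ball.mapClusterPt_iff_frequently]
  intro ε hε
  obtain ⟨R₀, -, hR₀⟩ := hasBasis_cofinite_lt_norm.eventually_iff.1 <|
    eventually_all.2 fun i => (hso i).eventually (Metric.ball_mem_nhds 0 hε)
  rw [hasBasis_cofinite_lt_norm.frequently_iff]
  intro R _
  set R' := max R R₀
  have hstep : ∀ x y, FarUnitStep R' x y → |Φ y - Φ x| < ε := by
    rintro x y ⟨hx, hy, i, rfl | rfl⟩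
    · simpa using hR₀ ((le_max_right _ _).trans_lt hx) i
    · rw [abs_sub_comm]
      simpa using hR₀ ((le_max_right _ _).trans_lt hy) i
  have hlow : liminf Φ cofinite < c + ε := by linarith [hc.1]
  have hhigh : c - ε < limsup Φ cofinite := by linarith [hc.2]
  obtain ⟨a, ha, hac⟩ := hasBasis_cofinite_lt_norm.frequently_iff.1
    (frequently_lt_of_liminf_lt hle.isCoboundedUnder_ge hlow) R' trivial
  obtain ⟨b, hb, hbc⟩ := hasBasis_cofinite_lt_norm.frequently_iff.1
    (frequently_lt_of_lt_limsup hge.isCoboundedUnder_le hhigh) R' trivial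
  obtain ⟨x, hax, hx⟩ := (reflTransGen_farUnitStep ha hb).exists_abs_sub_lt hstep hac hbc
  exact ⟨x, (le_max_left _ _).trans_lt (lt_norm_of_reflTransGen_farUnitStep hax ha),
    by rwa [Metric.mem_ball, Real.dist_eq]⟩

end LatticeWalks

theorem partial_limits_slowly_oscillating (n : ℕ) (hn : 1 < n)
    (Φ : (Fin n → ℤ) → ℝ) (C : ℝ) (hbdd : ∀ x, |Φ x| ≤ C)
    (hso : ∀ y : Fin n → ℤ,
      Tendsto (fun x => Φ (x + y) - Φ x) cofinite (nhds 0)) :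
    {c : ℝ | ∃ g : ℕ → Fin n → ℤ, Tendsto g atTop cofinite ∧
        Tendsto (fun m => Φ (g m)) atTop (nhds c)}
      = Set.Icc (liminf Φ cofinite) (limsup Φ cofinite) := by
  have : Nontrivial (Fin n) := Fin.nontrivial_iff_two_le.mpr hn
  have : (cofinite : Filter (Fin n → ℤ)).IsCountablyGenerated := by
    rw [cofinite_eq_comap_norm_atTop]
    infer_instance
  have hle : IsBoundedUnder (· ≤ ·) cofinite Φ :=
    isBoundedUnder_of ⟨C, fun x => (abs_le.1 (hbdd x)).2⟩
  have hge : IsBoundedUnder (· ≥ ·) cofinite Φ :=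
    isBoundedUnder_of ⟨-C, fun x => (abs_le.1 (hbdd x)).1⟩
  exact Set.ext fun c => exists_seq_tendsto_comp_iff_mapClusterPt.trans
    (mem_Icc_iff_mapClusterPt hle hge fun i => hso _).symm
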